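/- arXiv:1601.05074 — 3 statements merged into one kernel-verified Lean document; each statement's English description precedes it below -/
import Mathlib

section
/- The auxiliary function H is decreasing in its first argument relative to the current iterate: for every θ and θ̂, H(θ, θ̂) ≤ H(θ̂, θ̂). Equivalently, ∫ log(w_θ z) · w_{θ̂} z dμ(z) ≤ ∫ log(w_{θ̂} z) · w_{θ̂} z dμ(z), which follows from Jensen's inequality applied to the concave logarithm and the fact that w_θ and w_{θ̂} are probability densities with respect to μ. -/
open MeasureTheory

/-- The auxiliary function `H` is decreasing in its first argument
relative to the current iterate: `H(θ, θ̂) ≤ H(θ̂, θ̂)` for every `θ, θ̂`. -/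
theorem H_decreasing
    {Z : Type*} [MeasurableSpace Z] (μ : Measure Z) {Θ : Type*}
    (K : Z → Θ → ℝ) (hKpos : ∀ z θ, 0 < K z θ)
    (hKint : ∀ θ, Integrable (fun z => K z θ) μ)
    (V : Θ → ℝ) (hV : ∀ θ, V θ = ∫ z, K z θ ∂μ)
    (hVpos : ∀ θ, 0 < V θ)
    (J : Θ → ℝ) (hJ : ∀ θ, J θ = Real.log (V θ))
    (w : Θ → Z → ℝ) (hw : ∀ θ' z, w θ' z = K z θ' / V θ')
    (Q H : Θ → Θ → ℝ)
    (hQ : ∀ θ θ', Q θ θ' = ∫ z, Real.log (K z θ) * w θ' z ∂μ)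
    (hH : ∀ θ θ', H θ θ' = ∫ z, Real.log (K z θ / V θ) * w θ' z ∂μ)
    (hQint : ∀ θ θ', Integrable (fun z => Real.log (K z θ) * w θ' z) μ) :
    ∀ θ θhat, H θ θhat ≤ H θhat θhat := by
  intro θ θhat
  have hwpos : ∀ θ' z, 0 < w θ' z := fun θ' z => by
    rw [hw]; exact div_pos (hKpos z θ') (hVpos θ')
  have hwint : ∀ θ', Integrable (fun z => w θ' z) μ := fun θ' => by
    simp only [hw, div_eq_mul_inv]
    exact (hKint θ').mul_const _
  have hwInt : ∀ θ', ∫ z, w θ' z ∂μ = 1 := fun θ' => by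
    simp only [hw, div_eq_mul_inv]
    rw [integral_mul_const, ← hV, mul_inv_cancel₀ (hVpos θ').ne']
  have hfint : ∀ a b, Integrable (fun z => Real.log (K z a / V a) * w b z) μ := by
    intro a b
    have : (fun z => Real.log (K z a / V a) * w b z)
        = fun z => Real.log (K z a) * w b z - Real.log (V a) * w b z := by
      funext z
      rw [Real.log_div (hKpos z a).ne' (hVpos a).ne']
      ring
    rw [this]
    exact (hQint a b).sub ((hwint b).const_mul _)
  rw [hH, hH, ← sub_nonneg,
    ← integral_sub (hfint θhat θhat) (hfint θ θhat)]
  have key : ∀ z, w θhat z - w θ z ≤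
      Real.log (K z θhat / V θhat) * w θhat z - Real.log (K z θ / V θ) * w θhat z := by
    intro z
    have h1 : Real.log (w θ z / w θhat z) * w θhat z ≤ (w θ z / w θhat z - 1) * w θhat z :=
      mul_le_mul_of_nonneg_right
        (Real.log_le_sub_one_of_pos (div_pos (hwpos θ z) (hwpos θhat z))) (hwpos θhat z).le
    have h2 : (w θ z / w θhat z - 1) * w θhat z = w θ z - w θhat z := by
      rw [sub_mul, div_mul_cancel₀ _ (hwpos θhat z).ne', one_mul]
    have h3 : Real.log (w θ z / w θhat z)
        = Real.log (K z θ / V θ) - Real.log (K z θhat / V θhat) := by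
      rw [Real.log_div (hwpos θ z).ne' (hwpos θhat z).ne', hw, hw]
    rw [h3, h2] at h1
    nlinarith [h1]
  calc (0:ℝ) = ∫ z, (w θhat z - w θ z) ∂μ := by
        rw [integral_sub (hwint θhat) (hwint θ), hwInt, hwInt, sub_self]
    _ ≤ _ := integral_mono ((hwint θhat).sub (hwint θ))
        ((hfint θhat θhat).sub (hfint θ θhat)) key
end

section
/- Ascent property of the kernel surrogate: for every θ and θ̂, if Q(θ, θ̂) ≥ Q(θ̂, θ̂) then J(θ) ≥ J(θ̂); that is, any parameter value that increases the auxiliary function Q relative to the current iterate also increases the objective log V. -/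
open MeasureTheory

/-- Ascent property of the kernel surrogate: for every `θ` and `θ̂`,
if `Q(θ, θ̂) ≥ Q(θ̂, θ̂)` then `J(θ) ≥ J(θ̂)`. -/
theorem surrogate_ascent
    {Z : Type*} [MeasurableSpace Z] (μ : Measure Z) {Θ : Type*}
    (K : Z → Θ → ℝ) (hKpos : ∀ z θ, 0 < K z θ)
    (hKint : ∀ θ, Integrable (fun z => K z θ) μ)
    (V : Θ → ℝ) (hV : ∀ θ, V θ = ∫ z, K z θ ∂μ)
    (hVpos : ∀ θ, 0 < V θ)
    (J : Θ → ℝ) (hJ : ∀ θ, J θ = Real.log (V θ))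
    (w : Θ → Z → ℝ) (hw : ∀ θ' z, w θ' z = K z θ' / V θ')
    (Q H : Θ → Θ → ℝ)
    (hQ : ∀ θ θ', Q θ θ' = ∫ z, Real.log (K z θ) * w θ' z ∂μ)
    (hH : ∀ θ θ', H θ θ' = ∫ z, Real.log (K z θ / V θ) * w θ' z ∂μ)
    (hQint : ∀ θ θ', Integrable (fun z => Real.log (K z θ) * w θ' z) μ) :
    ∀ θ θhat, Q θhat θhat ≤ Q θ θhat → J θhat ≤ J θ := by
  intro θ θhat hQle
  have hwpos : ∀ θ' z, 0 < w θ' z := fun θ' z => by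
    rw [hw]; exact div_pos (hKpos z θ') (hVpos θ')
  have hwint : ∀ θ', Integrable (w θ') μ := fun θ' => by
    have h := (hKint θ').div_const (V θ')
    have : w θ' = fun z => K z θ' / V θ' := funext fun z => hw θ' z
    rw [this]; exact h
  have hwInt1 : ∀ θ', ∫ z, w θ' z ∂μ = 1 := fun θ' => by
    simp only [hw]
    rw [integral_div, ← hV, div_self (hVpos θ').ne']
  have hsplit : ∀ t, (fun z => Real.log (w t z) * w θhat z)
      = fun z => Real.log (K z t) * w θhat z - Real.log (V t) * w θhat z := by
    intro t; funext z
    rw [hw t z, Real.log_div (hKpos z t).ne' (hVpos t).ne']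
    ring
  have hlogwint : ∀ t, Integrable (fun z => Real.log (w t z) * w θhat z) μ := by
    intro t
    rw [hsplit t]
    exact (hQint t θhat).sub ((hwint θhat).const_mul _)
  have hpt : ∀ z, Real.log (w θ z) * w θhat z - Real.log (w θhat z) * w θhat z
      ≤ w θ z - w θhat z := by
    intro z
    have hb := hwpos θhat z
    have ha := hwpos θ z
    have h := Real.log_le_sub_one_of_pos (div_pos ha hb)
    rw [Real.log_div ha.ne' hb.ne'] at h
    have h2 := mul_le_mul_of_nonneg_right h hb.le
    calc Real.log (w θ z) * w θhat z - Real.log (w θhat z) * w θhat z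
        = (Real.log (w θ z) - Real.log (w θhat z)) * w θhat z := by ring
      _ ≤ (w θ z / w θhat z - 1) * w θhat z := h2
      _ = w θ z - w θhat z := by field_simp
  have hintle : ∫ z, (Real.log (w θ z) * w θhat z - Real.log (w θhat z) * w θhat z) ∂μ
      ≤ ∫ z, (w θ z - w θhat z) ∂μ :=
    integral_mono ((hlogwint θ).sub (hlogwint θhat)) ((hwint θ).sub (hwint θhat)) hpt
  rw [integral_sub (hlogwint θ) (hlogwint θhat), integral_sub (hwint θ) (hwint θhat),
    hwInt1, hwInt1, sub_self] at hintle
  have hcomp : ∀ t, ∫ z, Real.log (w t z) * w θhat z ∂μ = Q t θhat - J t := by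
    intro t
    rw [hsplit t, integral_sub (hQint t θhat) ((hwint θhat).const_mul _),
      integral_const_mul, hwInt1, hQ, hJ, mul_one]
  rw [hcomp θ, hcomp θhat] at hintle
  linarith
end

section
/- (Lemma 2, minorization and tangency.) Fix θ̂ and define the shifted surrogate Q̃(θ, θ̂) = Q(θ, θ̂) − Q(θ̂, θ̂) + J(θ̂). Then Q̃ is a minorizer of J that is tight at the current iterate: J(θ) ≥ Q̃(θ, θ̂) for every θ, and Q̃(θ̂, θ̂) = J(θ̂). -/
open MeasureTheory

/-- Lemma 2, minorization and tangency: the shifted surrogate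
`Q̃(θ, θ̂) = Q(θ, θ̂) − Q(θ̂, θ̂) + J(θ̂)` is a minorizer of `J` that is tight at
the current iterate: `J(θ) ≥ Q̃(θ, θ̂)` for every `θ`, and `Q̃(θ̂, θ̂) = J(θ̂)`. -/
theorem shifted_surrogate_minorizes
    {Z : Type*} [MeasurableSpace Z] (μ : Measure Z) {Θ : Type*}
    (K : Z → Θ → ℝ) (hKpos : ∀ z θ, 0 < K z θ)
    (hKint : ∀ θ, Integrable (fun z => K z θ) μ)
    (V : Θ → ℝ) (hV : ∀ θ, V θ = ∫ z, K z θ ∂μ)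
    (hVpos : ∀ θ, 0 < V θ)
    (J : Θ → ℝ) (hJ : ∀ θ, J θ = Real.log (V θ))
    (w : Θ → Z → ℝ) (hw : ∀ θ' z, w θ' z = K z θ' / V θ')
    (Q H : Θ → Θ → ℝ)
    (hQ : ∀ θ θ', Q θ θ' = ∫ z, Real.log (K z θ) * w θ' z ∂μ)
    (hH : ∀ θ θ', H θ θ' = ∫ z, Real.log (K z θ / V θ) * w θ' z ∂μ)
    (hQint : ∀ θ θ', Integrable (fun z => Real.log (K z θ) * w θ' z) μ) :
    ∀ θ θhat, (Q θ θhat - Q θhat θhat + J θhat ≤ J θ) ∧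
      (Q θhat θhat - Q θhat θhat + J θhat = J θhat) := by
  intro θ θhat
  refine ⟨?_, by ring⟩
  -- w θhat as a function
  have hwfun : w θhat = fun z => K z θhat / V θhat := funext fun z => hw θhat z
  have hwint : Integrable (w θhat) μ := by
    rw [hwfun]; exact (hKint θhat).div_const _
  have hVhne : (V θhat) ≠ 0 := (hVpos θhat).ne'
  have hVne : (V θ) ≠ 0 := (hVpos θ).ne'
  have hwone : ∫ z, w θhat z ∂μ = 1 := by
    rw [hwfun]
    rw [integral_div, ← hV, div_self hVhne]
  -- pointwise inequality
  have key : ∀ z, (Real.log (K z θ) - Real.log (K z θhat)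
      - Real.log (V θ) + Real.log (V θhat)) * w θhat z
      ≤ K z θ / V θ - w θhat z := by
    intro z
    rw [hw]
    have ha := hKpos z θ
    have hb := hKpos z θhat
    have hVθ := hVpos θ
    have hVθh := hVpos θhat
    set x : ℝ := (K z θ / V θ) / (K z θhat / V θhat) with hxdef
    have hx : 0 < x := by positivity
    have hlog : Real.log x ≤ x - 1 := Real.log_le_sub_one_of_pos hx
    have hlogx : Real.log x = Real.log (K z θ) - Real.log (K z θhat)
        - Real.log (V θ) + Real.log (V θhat) := by
      rw [hxdef, Real.log_div (by positivity) (by positivity),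
        Real.log_div ha.ne' hVne, Real.log_div hb.ne' hVhne]
      ring
    have hbpos : 0 < K z θhat / V θhat := by positivity
    have hmul := mul_le_mul_of_nonneg_right hlog hbpos.le
    have hxb : x * (K z θhat / V θhat) = K z θ / V θ := by
      rw [hxdef]; field_simp
    rw [hlogx] at hmul
    nlinarith [hmul, hxb]
  -- integrability of both sides
  have hfeq : (fun z => (Real.log (K z θ) - Real.log (K z θhat)
      - Real.log (V θ) + Real.log (V θhat)) * w θhat z)
      = fun z => Real.log (K z θ) * w θhat z - Real.log (K z θhat) * w θhat z
        - (Real.log (V θ) - Real.log (V θhat)) * w θhat z :=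
    funext fun z => by ring
  have hf : Integrable (fun z => (Real.log (K z θ) - Real.log (K z θhat)
      - Real.log (V θ) + Real.log (V θhat)) * w θhat z) μ := by
    rw [hfeq]
    exact ((hQint θ θhat).sub (hQint θhat θhat)).sub (hwint.const_mul _)
  have hg : Integrable (fun z => K z θ / V θ - w θhat z) μ :=
    ((hKint θ).div_const _).sub hwint
  have hAB : Integrable (fun z => Real.log (K z θ) * w θhat z
      - Real.log (K z θhat) * w θhat z) μ := (hQint θ θhat).sub (hQint θhat θhat)
  have hCw : Integrable (fun z => (Real.log (V θ) - Real.log (V θhat)) * w θhat z) μ :=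
    hwint.const_mul _
  have hKV : Integrable (fun z => K z θ / V θ) μ := (hKint θ).div_const _
  have hle := integral_mono hf hg key
  rw [hfeq] at hle
  rw [integral_sub hAB hCw, integral_sub (hQint θ θhat) (hQint θhat θhat),
    integral_sub hKV hwint,
    integral_const_mul, hwone, integral_div, ← hV, div_self hVne] at hle
  rw [hQ θ θhat, hQ θhat θhat, hJ θ, hJ θhat] at *
  linarith
end
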